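/- arXiv:2008.07103 — 6 statements merged into one kernel-verified Lean document; each statement's English description precedes it below -/
import Mathlib

section
/- For any random variable Z with finite second moment, var[Z] = 2∫_{−∞}^{∞} ( E[(Z−t)₊] − (E[Z]−t)₊ ) dt. -/
open MeasureTheory ProbabilityTheory Set

/-!
For fixed `t`, `rampBregman m z t` is the Bregman divergence, between `z` and `m`, of the convex
ramp `x ↦ (x - t)₊`. Bregman divergences are linear in the convex function and only see its second
derivative; the ramps have second derivatives `δ_t`, which integrate over `t` to `1`, the second
derivative of `x ↦ x² / 2`. Hence `∫ rampBregman m z t dt = (z - m)² / 2`. Put `z = Z ω` and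
`m = E[Z]`: the linear part of the divergence has mean zero, and Fubini, justified by nonnegativity
of the divergence and `E[(Z - m)²] < ∞`, exchanges the two integrals.
-/

noncomputable def rampBregman (m z t : ℝ) : ℝ :=
  max (z - t) 0 - max (m - t) 0 - (z - m) * (Iic m).indicator 1 t

lemma rampBregman_of_le {m z : ℝ} (h : m ≤ z) :
    rampBregman m z = (Ioc m z).indicator (fun t => z - t) := by
  ext t
  simp only [rampBregman, indicator_apply, mem_Iic, mem_Ioc, Pi.one_apply]
  split_ifs <;> grind

lemma rampBregman_of_ge {m z : ℝ} (h : z ≤ m) :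
    rampBregman m z = (Ioc z m).indicator (fun t => t - z) := by
  ext t
  simp only [rampBregman, indicator_apply, mem_Iic, mem_Ioc, Pi.one_apply]
  split_ifs <;> grind

lemma rampBregman_nonneg (m z t : ℝ) : 0 ≤ rampBregman m z t := by
  rcases le_total m z with h | h
  · rw [rampBregman_of_le h]
    exact indicator_nonneg (fun s hs => sub_nonneg.2 hs.2) t
  · rw [rampBregman_of_ge h]
    exact indicator_nonneg (fun s hs => sub_nonneg.2 hs.1.le) t

lemma integrable_rampBregman (m z : ℝ) : Integrable (rampBregman m z) := by
  rcases le_total m z with h | h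
  · rw [rampBregman_of_le h, integrable_indicator_iff measurableSet_Ioc]
    exact (by fun_prop : Continuous fun t : ℝ => z - t).integrableOn_Ioc
  · rw [rampBregman_of_ge h, integrable_indicator_iff measurableSet_Ioc]
    exact (by fun_prop : Continuous fun t : ℝ => t - z).integrableOn_Ioc

lemma integral_rampBregman (m z : ℝ) : ∫ t, rampBregman m z t = (z - m) ^ 2 / 2 := by
  rcases le_total m z with h | h
  · rw [rampBregman_of_le h, integral_indicator measurableSet_Ioc,
      ← intervalIntegral.integral_of_le h, intervalIntegral.integral_comp_sub_left (fun t => t)]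
    simp
  · rw [rampBregman_of_ge h, integral_indicator measurableSet_Ioc,
      ← intervalIntegral.integral_of_le h, intervalIntegral.integral_comp_sub_right (fun t => t)]
    simp only [sub_self, integral_id]
    ring

lemma measurable_rampBregman (m : ℝ) :
    Measurable fun p : ℝ × ℝ => rampBregman m p.1 p.2 := by
  unfold rampBregman
  measurability

section Expectation

variable {Ω : Type*} [MeasurableSpace Ω] {μ : Measure Ω} {X : Ω → ℝ}

lemma integrable_rampBregman_prod [IsFiniteMeasure μ] (m : ℝ) (hX : MemLp X 2 μ) :
    Integrable (fun p : Ω × ℝ => rampBregman m (X p.1) p.2) (μ.prod volume) := by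
  have hmeas : AEMeasurable (fun p : Ω × ℝ => rampBregman m (X p.1) p.2) (μ.prod volume) :=
    (measurable_rampBregman m).comp_aemeasurable
      (hX.aemeasurable.comp_fst.prodMk measurable_snd.aemeasurable)
  rw [integrable_prod_iff hmeas.aestronglyMeasurable]
  refine ⟨ae_of_all _ fun ω => integrable_rampBregman m (X ω), ?_⟩
  simp_rw [Real.norm_eq_abs, abs_of_nonneg (rampBregman_nonneg m _ _),
    integral_rampBregman]
  exact ((hX.sub (memLp_const m)).integrable_sq).div_const 2

lemma integral_rampBregman_mean [IsProbabilityMeasure μ] (hX : Integrable X μ) (t : ℝ) :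
    ∫ ω, rampBregman μ[X] (X ω) t ∂μ = (∫ ω, max (X ω - t) 0 ∂μ) - max (μ[X] - t) 0 := by
  have hcentered : ∫ ω, (X ω - μ[X]) ∂μ = 0 := by
    rw [integral_sub hX (integrable_const _)]
    simp
  have hpos : Integrable (fun ω => max (X ω - t) 0) μ := (hX.sub (integrable_const t)).pos_part
  have hlin : Integrable (fun ω => (X ω - μ[X]) * (Iic μ[X]).indicator 1 t) μ :=
    (hX.sub (integrable_const _)).mul_const _
  simp only [rampBregman]
  rw [integral_sub (f := fun ω => max (X ω - t) 0 - max (μ[X] - t) 0)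
      (hpos.sub (integrable_const _)) hlin,
    integral_sub hpos (integrable_const _), integral_mul_const, hcentered]
  simp

end Expectation

theorem stmt2_general {Ω : Type*} [MeasurableSpace Ω] (μ : Measure Ω) [IsProbabilityMeasure μ]
    (Z : Ω → ℝ) (hZ2 : MemLp Z 2 μ) :
    variance Z μ =
      2 * ∫ t : ℝ, ((∫ ω, max (Z ω - t) 0 ∂μ) - max ((∫ ω, Z ω ∂μ) - t) 0) := by
  calc variance Z μ = 2 * ∫ ω, (Z ω - μ[Z]) ^ 2 / 2 ∂μ := by
        rw [variance_eq_integral hZ2.aemeasurable, integral_div]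
        ring
    _ = 2 * ∫ ω, (∫ t, rampBregman μ[Z] (Z ω) t) ∂μ := by
        simp_rw [integral_rampBregman]
    _ = 2 * ∫ t, (∫ ω, rampBregman μ[Z] (Z ω) t ∂μ) := by
        rw [integral_integral_swap (integrable_rampBregman_prod _ hZ2)]
    _ = _ := by
        simp_rw [integral_rampBregman_mean (hZ2.integrable one_le_two)]

theorem stmt2 {Ω : Type*} [MeasurableSpace Ω] (μ : Measure Ω) [IsProbabilityMeasure μ]
    (Z : Ω → ℝ) (hZmeas : Measurable Z) (hZ2 : MemLp Z 2 μ) :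
    variance Z μ =
      2 * ∫ t : ℝ, ((∫ ω, max (Z ω - t) 0 ∂μ) - max ((∫ ω, Z ω ∂μ) - t) 0) :=
  stmt2_general μ Z hZ2
end

section
/- (Karlin–Novikoff criterion) Suppose Z and Y are integrable random variables with E[Z] ≤ E[Y] < ∞, and the c.d.f. of Z up-crosses the c.d.f. of Y, i.e., there exists z₀ such that F_Z(x) ≤ F_Y(x) for x < z₀ and F_Z(x) ≥ F_Y(x) for x ≥ z₀. Then Z is smaller than Y in stop-loss order: E[(Z−d)₊] ≤ E[(Y−d)₊] for all real d. -/
/-!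
Write `π_X(d) = E[(X - d)₊] = ∫_{t > 0} P(X > d + t) dt`. If `d ≥ z₀`, every tail `P(Z > x)` with
`x > d` is at most `P(Y > x)`, because `F_Z ≥ F_Y` to the right of `z₀`. If `d < z₀`, the identity
`(x - d)₊ = (x - d) + (d - x)₊` gives `π_X(d) = E[X] - d + E[(d - X)₊]`, and
`E[(d - X)₊] = ∫_{t > 0} F_X(d - t) dt` is smaller for `Z` since `F_Z ≤ F_Y` to the left of `z₀`;
together with `E[Z] ≤ E[Y]` this gives the claim.
-/

open MeasureTheory ProbabilityTheory Set

section LayerCake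

variable {α β : Type*} [MeasurableSpace α] [MeasurableSpace β] {μ : Measure α} {ν : Measure β}
  {f : α → ℝ} {g : β → ℝ}

lemma integral_le_integral_of_lintegral_ofReal_le (hf : 0 ≤ᵐ[μ] f) (hfm : AEMeasurable f μ)
    (hg : 0 ≤ᵐ[ν] g) (hgi : Integrable g ν)
    (h : ∫⁻ a, ENNReal.ofReal (f a) ∂μ ≤ ∫⁻ b, ENNReal.ofReal (g b) ∂ν) :
    ∫ a, f a ∂μ ≤ ∫ b, g b ∂ν := by
  rw [integral_eq_lintegral_of_nonneg_ae hf hfm.aestronglyMeasurable,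
    integral_eq_lintegral_of_nonneg_ae hg hgi.aestronglyMeasurable]
  exact ENNReal.toReal_mono (ne_of_lt (by simpa using hgi.lintegral_lt_top)) h

lemma integral_le_integral_of_meas_lt_le (hf : 0 ≤ᵐ[μ] f) (hfm : AEMeasurable f μ)
    (hg : 0 ≤ᵐ[ν] g) (hgi : Integrable g ν)
    (h : ∀ t > 0, μ {a | t < f a} ≤ ν {b | t < g b}) :
    ∫ a, f a ∂μ ≤ ∫ b, g b ∂ν := by
  refine integral_le_integral_of_lintegral_ofReal_le hf hfm hg hgi ?_
  rw [lintegral_eq_lintegral_meas_lt μ hf hfm, lintegral_eq_lintegral_meas_lt ν hg hgi.aemeasurable]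
  exact setLIntegral_mono' measurableSet_Ioi h

lemma integral_le_integral_of_meas_le_le (hf : 0 ≤ᵐ[μ] f) (hfm : AEMeasurable f μ)
    (hg : 0 ≤ᵐ[ν] g) (hgi : Integrable g ν)
    (h : ∀ t > 0, μ {a | t ≤ f a} ≤ ν {b | t ≤ g b}) :
    ∫ a, f a ∂μ ≤ ∫ b, g b ∂ν := by
  refine integral_le_integral_of_lintegral_ofReal_le hf hfm hg hgi ?_
  rw [lintegral_eq_lintegral_meas_le μ hf hfm, lintegral_eq_lintegral_meas_le ν hg hgi.aemeasurable]
  exact setLIntegral_mono' measurableSet_Ioi h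

end LayerCake

lemma setOf_lt_max_sub_zero {γ : Type*} (W : γ → ℝ) {d t : ℝ} (ht : 0 < t) :
    {c | t < max (W c - d) 0} = {c | d + t < W c} := by
  ext c
  change t < max (W c - d) 0 ↔ d + t < W c
  rw [lt_max_iff, or_iff_left ht.not_gt, lt_sub_iff_add_lt']

lemma setOf_le_max_sub_zero {γ : Type*} (W : γ → ℝ) {d t : ℝ} (ht : 0 < t) :
    {c | t ≤ max (d - W c) 0} = {c | W c ≤ d - t} := by
  ext c
  change t ≤ max (d - W c) 0 ↔ W c ≤ d - t
  rw [le_max_iff, or_iff_left ht.not_ge, le_sub_comm]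

lemma measure_lt_eq_one_sub_measure_le {γ : Type*} [MeasurableSpace γ] {ρ : Measure γ}
    [IsProbabilityMeasure ρ] {W : γ → ℝ} (hW : AEMeasurable W ρ) {x : ℝ} :
    ρ {c | x < W c} = 1 - ρ {c | W c ≤ x} := by
  rw [← prob_compl_eq_one_sub₀ (nullMeasurableSet_le hW aemeasurable_const)]
  congr 1 with c
  exact (not_le (a := W c) (b := x)).symm

section StopLoss

variable {α β : Type*} [MeasurableSpace α] [MeasurableSpace β] {μ : Measure α} {ν : Measure β}
  {X : α → ℝ} {Y : β → ℝ}

lemma integral_max_sub_zero_le_of_meas_lt_le [IsFiniteMeasure ν] (hX : AEMeasurable X μ)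
    (hY : Integrable Y ν) (d : ℝ) (h : ∀ x > d, μ {a | x < X a} ≤ ν {b | x < Y b}) :
    ∫ a, max (X a - d) 0 ∂μ ≤ ∫ b, max (Y b - d) 0 ∂ν := by
  refine integral_le_integral_of_meas_lt_le (.of_forall fun _ ↦ le_max_right _ _)
    ((hX.sub_const d).max aemeasurable_const) (.of_forall fun _ ↦ le_max_right _ _)
    (hY.sub (integrable_const d)).pos_part fun t ht ↦ ?_
  rw [setOf_lt_max_sub_zero X ht, setOf_lt_max_sub_zero Y ht]
  exact h (d + t) (by linarith)

lemma integral_max_sub_zero_le_of_meas_le_le [IsFiniteMeasure ν] (hX : AEMeasurable X μ)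
    (hY : Integrable Y ν) (d : ℝ) (h : ∀ x < d, μ {a | X a ≤ x} ≤ ν {b | Y b ≤ x}) :
    ∫ a, max (d - X a) 0 ∂μ ≤ ∫ b, max (d - Y b) 0 ∂ν := by
  refine integral_le_integral_of_meas_le_le (.of_forall fun _ ↦ le_max_right _ _)
    ((hX.const_sub d).max aemeasurable_const) (.of_forall fun _ ↦ le_max_right _ _)
    ((integrable_const d).sub hY).pos_part fun t ht ↦ ?_
  rw [setOf_le_max_sub_zero X ht, setOf_le_max_sub_zero Y ht]
  exact h (d - t) (by linarith)

lemma integral_max_sub_zero_eq [IsProbabilityMeasure μ] (hX : Integrable X μ) (d : ℝ) :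
    ∫ a, max (X a - d) 0 ∂μ = ∫ a, X a ∂μ - d + ∫ a, max (d - X a) 0 ∂μ := by
  have hpos : Integrable (fun a ↦ max (X a - d) 0) μ := (hX.sub (integrable_const d)).pos_part
  have hneg : Integrable (fun a ↦ max (d - X a) 0) μ := ((integrable_const d).sub hX).pos_part
  have hparts : ∫ a, max (X a - d) 0 ∂μ - ∫ a, max (d - X a) 0 ∂μ = ∫ a, X a - d ∂μ := by
    rw [← integral_sub hpos hneg]
    congr 1 with a
    simpa using max_zero_sub_max_neg_zero_eq_self (X a - d)
  rw [integral_sub hX (integrable_const d), integral_const, probReal_univ, one_smul] at hparts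
  linarith

end StopLoss

theorem stmt3_general {Ω : Type*} [MeasurableSpace Ω] (μ : Measure Ω) [IsProbabilityMeasure μ]
    (Z Y : Ω → ℝ) (hZint : Integrable Z μ) (hYint : Integrable Y μ)
    (hmean : ∫ ω, Z ω ∂μ ≤ ∫ ω, Y ω ∂μ)
    (hcross : ∃ z₀ : ℝ,
      (∀ x < z₀, (μ {ω | Z ω ≤ x}).toReal ≤ (μ {ω | Y ω ≤ x}).toReal) ∧
      (∀ x ≥ z₀, (μ {ω | Z ω ≤ x}).toReal ≥ (μ {ω | Y ω ≤ x}).toReal)) :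
    ∀ d : ℝ, ∫ ω, max (Z ω - d) 0 ∂μ ≤ ∫ ω, max (Y ω - d) 0 ∂μ := by
  obtain ⟨z₀, hleft, hright⟩ := hcross
  have cdf_le {X X' : Ω → ℝ} {x : ℝ}
      (h : (μ {ω | X ω ≤ x}).toReal ≤ (μ {ω | X' ω ≤ x}).toReal) :
      μ {ω | X ω ≤ x} ≤ μ {ω | X' ω ≤ x} :=
    (ENNReal.toReal_le_toReal (measure_ne_top _ _) (measure_ne_top _ _)).mp h
  intro d
  rcases le_or_gt z₀ d with hd | hd
  · refine integral_max_sub_zero_le_of_meas_lt_le hZint.aemeasurable hYint d fun x hx ↦ ?_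
    rw [measure_lt_eq_one_sub_measure_le hZint.aemeasurable,
      measure_lt_eq_one_sub_measure_le hYint.aemeasurable]
    exact tsub_le_tsub_left (cdf_le (hright x (by linarith))) 1
  · have hbelow := integral_max_sub_zero_le_of_meas_le_le hZint.aemeasurable hYint d
      fun x hx ↦ cdf_le (hleft x (hx.trans hd))
    rw [integral_max_sub_zero_eq hZint, integral_max_sub_zero_eq hYint]
    linarith

theorem stmt3 {Ω : Type*} [MeasurableSpace Ω] (μ : Measure Ω) [IsProbabilityMeasure μ]
    (Z Y : Ω → ℝ) (hZmeas : Measurable Z) (hYmeas : Measurable Y)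
    (hZint : Integrable Z μ) (hYint : Integrable Y μ)
    (hmean : ∫ ω, Z ω ∂μ ≤ ∫ ω, Y ω ∂μ)
    (hcross : ∃ z₀ : ℝ,
      (∀ x < z₀, (μ {ω | Z ω ≤ x}).toReal ≤ (μ {ω | Y ω ≤ x}).toReal) ∧
      (∀ x ≥ z₀, (μ {ω | Z ω ≤ x}).toReal ≥ (μ {ω | Y ω ≤ x}).toReal)) :
    ∀ d : ℝ, ∫ ω, max (Z ω - d) 0 ∂μ ≤ ∫ ω, max (Y ω - d) 0 ∂μ :=
  stmt3_general μ Z Y hZint hYint hmean hcross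
end

section
/- (Ohlin's lemma) Let Y be a random variable and h₁, h₂ two increasing functions with E[h₁(Y)] = E[h₂(Y)] finite. If h₁ up-crosses h₂, then h₂(Y) is smaller than h₁(Y) in convex order: E[(h₂(Y)−d)₊] ≤ E[(h₁(Y)−d)₊] for all real d. -/
open MeasureTheory ProbabilityTheory Set

lemma max_sub_le_aux {a b d : ℝ} (hab : a ≤ b) :
    max (b - d) 0 ≤ max (a - d) 0 + (b - a) := by
  rcases le_total (b - d) 0 with h | h
  · rw [max_eq_right h]
    have := le_max_right (a - d) (0 : ℝ)
    linarith
  · rw [max_eq_left h]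
    have := le_max_left (a - d) (0 : ℝ)
    linarith

theorem stmt4 {Ω : Type*} [MeasurableSpace Ω] (μ : Measure Ω) [IsProbabilityMeasure μ]
    (Y : Ω → ℝ) (hYmeas : Measurable Y)
    (h₁ h₂ : ℝ → ℝ) (hh₁mono : Monotone h₁) (hh₂mono : Monotone h₂)
    (hh₁int : Integrable (fun ω => h₁ (Y ω)) μ)
    (hh₂int : Integrable (fun ω => h₂ (Y ω)) μ)
    (hmean : ∫ ω, h₁ (Y ω) ∂μ = ∫ ω, h₂ (Y ω) ∂μ)
    (hcross : ∃ z₀ : ℝ, (∀ x < z₀, h₁ x ≤ h₂ x) ∧ (∀ x ≥ z₀, h₁ x ≥ h₂ x)) :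
    ∀ d : ℝ, ∫ ω, max (h₂ (Y ω) - d) 0 ∂μ ≤ ∫ ω, max (h₁ (Y ω) - d) 0 ∂μ := by
  obtain ⟨z₀, hleft, hright⟩ := hcross
  intro d
  have hint1 : Integrable (fun ω => max (h₁ (Y ω) - d) 0) μ :=
    (hh₁int.sub (integrable_const d)).pos_part
  have hint2 : Integrable (fun ω => max (h₂ (Y ω) - d) 0) μ :=
    (hh₂int.sub (integrable_const d)).pos_part
  have hsub : Integrable (fun ω => h₂ (Y ω) - h₁ (Y ω)) μ := hh₂int.sub hh₁int
  rcases lt_or_ge d (h₂ z₀) with hd | hd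
  · -- c = 1 : pointwise max(h₂-d,0) ≤ max(h₁-d,0) + (h₂ - h₁)
    have hpt : ∀ ω, max (h₂ (Y ω) - d) 0 ≤
        max (h₁ (Y ω) - d) 0 + (h₂ (Y ω) - h₁ (Y ω)) := by
      intro ω
      set x := Y ω with hx
      rcases lt_or_ge x z₀ with hxz | hxz
      · exact max_sub_le_aux (hleft x hxz)
      · have h2 : d ≤ h₂ x := le_trans hd.le (hh₂mono hxz)
        have h1 : h₂ x ≤ h₁ x := hright x hxz
        rw [max_eq_left (by linarith), max_eq_left (by linarith)]
        ring_nf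
        linarith
    calc ∫ ω, max (h₂ (Y ω) - d) 0 ∂μ
        ≤ ∫ ω, (max (h₁ (Y ω) - d) 0 + (h₂ (Y ω) - h₁ (Y ω))) ∂μ :=
          integral_mono hint2 (hint1.add hsub) hpt
      _ = ∫ ω, max (h₁ (Y ω) - d) 0 ∂μ + (∫ ω, h₂ (Y ω) ∂μ - ∫ ω, h₁ (Y ω) ∂μ) := by
          rw [integral_add hint1 hsub, integral_sub hh₂int hh₁int]
      _ = ∫ ω, max (h₁ (Y ω) - d) 0 ∂μ := by rw [hmean]; ring
  · -- c = 0 : pointwise max(h₂-d,0) ≤ max(h₁-d,0)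
    have hpt : ∀ ω, max (h₂ (Y ω) - d) 0 ≤ max (h₁ (Y ω) - d) 0 := by
      intro ω
      set x := Y ω with hx
      rcases lt_or_ge x z₀ with hxz | hxz
      · have : h₂ x ≤ d := le_trans (hh₂mono hxz.le) hd
        rw [max_eq_right (by linarith)]
        exact le_max_right _ _
      · exact max_le_max (by linarith [hright x hxz]) le_rfl
    exact integral_mono hint2 hint1 hpt
end

section
/- (Gollier–Schlesinger) Let X be a nonnegative bounded random variable and h a function with 0 ≤ h(x) ≤ x for all x. If d ∈ [0, M] satisfies E[min(X,d)] = E[h(X)], then min(X,d) is smaller than h(X) in convex order. -/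
open MeasureTheory ProbabilityTheory Set

theorem stmt6 {Ω : Type*} [MeasurableSpace Ω] (μ : Measure Ω) [IsProbabilityMeasure μ]
    (X : Ω → ℝ) (M : ℝ) (hXmeas : Measurable X)
    (hX0 : ∀ ω, 0 ≤ X ω) (hXM : ∀ ω, X ω ≤ M)
    (h : ℝ → ℝ) (hhmeas : Measurable h)
    (hh : ∀ x ∈ Set.Icc (0:ℝ) M, 0 ≤ h x ∧ h x ≤ x)
    (d : ℝ) (hd : d ∈ Set.Icc (0:ℝ) M)
    (hmean : ∫ ω, min (X ω) d ∂μ = ∫ ω, h (X ω) ∂μ) :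
    ∀ d' : ℝ, ∫ ω, max (min (X ω) d - d') 0 ∂μ ≤ ∫ ω, max (h (X ω) - d') 0 ∂μ := by
  have hM : (0:ℝ) ≤ M := le_trans hd.1 hd.2
  have hXb : ∀ ω, |X ω| ≤ M := fun ω => abs_le.2 ⟨by linarith [hX0 ω], hXM ω⟩
  have hhX : ∀ ω, 0 ≤ h (X ω) ∧ h (X ω) ≤ X ω := fun ω => hh _ ⟨hX0 ω, hXM ω⟩
  have hintg : ∀ (f : Ω → ℝ), Measurable f → ∀ C : ℝ, (∀ ω, |f ω| ≤ C) → Integrable f μ := by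
    intro f hf C hC
    exact (integrable_const C).mono' hf.aestronglyMeasurable (ae_of_all _ (by simpa using hC))
  have habs_min : ∀ a b : ℝ, |min a b| ≤ |a| + |b| := by
    intro a b
    rcases min_cases a b with ⟨he, _⟩ | ⟨he, _⟩ <;> rw [he]
    · linarith [abs_nonneg b]
    · linarith [abs_nonneg a]
  have habs_max : ∀ a : ℝ, |max a 0| ≤ |a| := by
    intro a
    rw [abs_of_nonneg (le_max_right a 0)]
    exact max_le (le_abs_self a) (abs_nonneg a)
  have i3 : Integrable (fun ω => h (X ω)) μ := by
    refine hintg _ (hhmeas.comp hXmeas) M (fun ω => ?_)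
    rw [abs_of_nonneg (hhX ω).1]
    exact le_trans (hhX ω).2 (hXM ω)
  intro d'
  have i4 : Integrable (fun ω => max (h (X ω) - d') 0) μ := by
    refine hintg _ (((hhmeas.comp hXmeas).sub measurable_const).max measurable_const)
      (M + |d'|) (fun ω => ?_)
    refine le_trans (habs_max _) (le_trans (abs_sub _ _) ?_)
    have : |h (X ω)| ≤ M := by
      rw [abs_of_nonneg (hhX ω).1]; exact le_trans (hhX ω).2 (hXM ω)
    linarith
  by_cases hdd : d' ≤ d
  · have i1 : Integrable (fun ω => min (X ω) d) μ := by
      refine hintg _ (hXmeas.min measurable_const) (M + |d|) (fun ω => ?_)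
      exact le_trans (habs_min _ _) (by linarith [hXb ω])
    have i2 : Integrable (fun ω => min (X ω) d') μ := by
      refine hintg _ (hXmeas.min measurable_const) (M + |d'|) (fun ω => ?_)
      exact le_trans (habs_min _ _) (by linarith [hXb ω])
    have hL : ∫ ω, max (min (X ω) d - d') 0 ∂μ
        = ∫ ω, min (X ω) d ∂μ - ∫ ω, min (X ω) d' ∂μ := by
      rw [← integral_sub i1 i2]
      refine integral_congr_ae (ae_of_all _ (fun ω => ?_))
      show max (min (X ω) d - d') 0 = min (X ω) d - min (X ω) d'
      rcases le_total (X ω) d' with hc | hc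
      · have h1 : min (X ω) d = X ω := min_eq_left (hc.trans hdd)
        have h2 : min (X ω) d' = X ω := min_eq_left hc
        rw [h1, h2, max_eq_right (by linarith)]
        ring
      · have h2 : min (X ω) d' = d' := min_eq_right hc
        have h3 : d' ≤ min (X ω) d := le_min hc hdd
        rw [h2, max_eq_left (by linarith)]
    have hR : ∫ ω, h (X ω) ∂μ - ∫ ω, min (X ω) d' ∂μ
        ≤ ∫ ω, max (h (X ω) - d') 0 ∂μ := by
      rw [← integral_sub i3 i2]
      refine integral_mono (i3.sub i2) i4 (fun ω => ?_)
      rcases le_total (X ω) d' with hc | hc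
      · have h2 : min (X ω) d' = X ω := min_eq_left hc
        simp only [h2]
        have := (hhX ω).2
        exact le_trans (by linarith) (le_max_right _ 0)
      · have h2 : min (X ω) d' = d' := min_eq_right hc
        simp only [h2]
        exact le_max_left _ 0
    rw [hL]
    linarith [hmean]
  · have hL : ∫ ω, max (min (X ω) d - d') 0 ∂μ = 0 := by
      have : ∀ ω, max (min (X ω) d - d') 0 = 0 := fun ω =>
        max_eq_right (by linarith [min_le_right (X ω) d])
      simp [this]
    rw [hL]
    exact integral_nonneg (fun ω => le_max_right _ 0)
end

section
/- Let X be a nonnegative bounded random variable and let h₁, h₂ be nonnegative increasing functions with E[(h₁(X))²] = E[(h₂(X))²] finite. If h₁ up-crosses h₂, then either h₁(X) and h₂(X) have the same distribution or E[h₁(X)] < E[h₂(X)]. -/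
open MeasureTheory Set

private lemma bdd_int {Ω : Type*} [MeasurableSpace Ω] (μ : Measure Ω) [IsFiniteMeasure μ]
    {f : Ω → ℝ} (hf : Measurable f) (C : ℝ) (h : ∀ ω, |f ω| ≤ C) : Integrable f μ :=
  (integrable_const C).mono' hf.aestronglyMeasurable (Filter.Eventually.of_forall h)

theorem stmt12 {Ω : Type*} [MeasurableSpace Ω] (μ : Measure Ω) [IsProbabilityMeasure μ]
    (X : Ω → ℝ) (M : ℝ) (hXmeas : Measurable X)
    (hX0 : ∀ ω, 0 ≤ X ω) (hXM : ∀ ω, X ω ≤ M)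
    (h₁ h₂ : ℝ → ℝ) (hh₁meas : Measurable h₁) (hh₂meas : Measurable h₂)
    (hh₁mono : Monotone h₁) (hh₂mono : Monotone h₂)
    (hh₁0 : ∀ x, 0 ≤ x → 0 ≤ h₁ x) (hh₂0 : ∀ x, 0 ≤ x → 0 ≤ h₂ x)
    (hmom : ∫ ω, (h₁ (X ω)) ^ 2 ∂μ = ∫ ω, (h₂ (X ω)) ^ 2 ∂μ)
    (hcross : ∃ z₀ : ℝ, (∀ x < z₀, h₁ x ≤ h₂ x) ∧ (∀ x ≥ z₀, h₁ x ≥ h₂ x)) :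
    μ.map (fun ω => h₁ (X ω)) = μ.map (fun ω => h₂ (X ω)) ∨
      ∫ ω, h₁ (X ω) ∂μ < ∫ ω, h₂ (X ω) ∂μ := by
  obtain ⟨z₀, h1le, h2le⟩ := hcross
  set z : ℝ := max z₀ 0 with hzdef
  have hz0 : (0:ℝ) ≤ z := le_max_right _ _
  set s : ℝ := h₁ z + h₂ z with hsdef
  set d : ℝ := h₁ z - h₂ z with hddef
  have hs0 : 0 ≤ s := add_nonneg (hh₁0 z hz0) (hh₂0 z hz0)
  have hd0 : 0 ≤ d := sub_nonneg.mpr (h2le z (le_max_left _ _))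
  -- pointwise bounds
  have hb1 : ∀ ω, 0 ≤ h₁ (X ω) ∧ h₁ (X ω) ≤ h₁ M :=
    fun ω => ⟨hh₁0 _ (hX0 ω), hh₁mono (hXM ω)⟩
  have hb2 : ∀ ω, 0 ≤ h₂ (X ω) ∧ h₂ (X ω) ≤ h₂ M :=
    fun ω => ⟨hh₂0 _ (hX0 ω), hh₂mono (hXM ω)⟩
  have hm1 : Measurable fun ω => h₁ (X ω) := hh₁meas.comp hXmeas
  have hm2 : Measurable fun ω => h₂ (X ω) := hh₂meas.comp hXmeas
  -- integrabilities
  have hi1 : Integrable (fun ω => h₁ (X ω)) μ := by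
    refine bdd_int μ hm1 (h₁ M) fun ω => ?_
    have := hb1 ω; exact abs_le.mpr ⟨by linarith [this.1, this.2], this.2⟩
  have hi2 : Integrable (fun ω => h₂ (X ω)) μ := by
    refine bdd_int μ hm2 (h₂ M) fun ω => ?_
    have := hb2 ω; exact abs_le.mpr ⟨by linarith [this.1, this.2], this.2⟩
  have hisq1 : Integrable (fun ω => h₁ (X ω) ^ 2) μ := by
    refine bdd_int μ (hm1.pow_const 2) (h₁ M ^ 2) fun ω => ?_
    have := hb1 ω
    rw [abs_of_nonneg (sq_nonneg _)]
    nlinarith [this.1, this.2]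
  have hisq2 : Integrable (fun ω => h₂ (X ω) ^ 2) μ := by
    refine bdd_int μ (hm2.pow_const 2) (h₂ M ^ 2) fun ω => ?_
    have := hb2 ω
    rw [abs_of_nonneg (sq_nonneg _)]
    nlinarith [this.1, this.2]
  have hiq : Integrable (fun ω => (h₁ (X ω) - h₂ (X ω)) ^ 2) μ := by
    refine bdd_int μ ((hm1.sub hm2).pow_const 2) ((h₁ M + h₂ M) ^ 2) fun ω => ?_
    have h1 := hb1 ω; have h2 := hb2 ω
    rw [abs_of_nonneg (sq_nonneg _)]
    nlinarith [h1.1, h1.2, h2.1, h2.2]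
  -- the key nonnegative function
  have key : ∀ x : ℝ, 0 ≤ x → 0 ≤ (h₂ x - h₁ x) * (s - h₁ x - h₂ x) := by
    intro x hx
    rcases lt_or_ge x z with hxz | hxz
    · have hxz₀ : x < z₀ := by
        rcases lt_max_iff.mp hxz with h | h
        · exact h
        · linarith
      have h12 : h₁ x ≤ h₂ x := h1le x hxz₀
      have m1 : h₁ x ≤ h₁ z := hh₁mono hxz.le
      have m2 : h₂ x ≤ h₂ z := hh₂mono hxz.le
      exact mul_nonneg (by linarith) (by simp only [hsdef]; linarith)
    · have h12 : h₂ x ≤ h₁ x := h2le x (le_trans (le_max_left _ _) hxz)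
      have m1 : h₁ z ≤ h₁ x := hh₁mono hxz
      have m2 : h₂ z ≤ h₂ x := hh₂mono hxz
      have e1 : h₂ x - h₁ x ≤ 0 := by linarith
      have e2 : s - h₁ x - h₂ x ≤ 0 := by simp only [hsdef]; linarith
      nlinarith
  have key2 : ∀ x : ℝ, 0 ≤ x → (h₂ x - h₁ x) * (s - h₁ x - h₂ x) = 0 →
      (h₁ x - h₂ x) * (d - (h₁ x - h₂ x)) = 0 := by
    intro x hx h
    rcases mul_eq_zero.mp h with h | h
    · have : h₁ x - h₂ x = 0 := by linarith
      rw [this, zero_mul]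
    · have hsum : h₁ x + h₂ x = s := by linarith
      rcases lt_or_ge x z with hxz | hxz
      · have m1 : h₁ x ≤ h₁ z := hh₁mono hxz.le
        have m2 : h₂ x ≤ h₂ z := hh₂mono hxz.le
        have e1 : h₁ x = h₁ z := by simp only [hsdef] at hsum; linarith
        have e2 : h₂ x = h₂ z := by simp only [hsdef] at hsum; linarith
        have : d - (h₁ x - h₂ x) = 0 := by rw [hddef, e1, e2]; ring
        rw [this, mul_zero]
      · have m1 : h₁ z ≤ h₁ x := hh₁mono hxz
        have m2 : h₂ z ≤ h₂ x := hh₂mono hxz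
        have e1 : h₁ x = h₁ z := by simp only [hsdef] at hsum; linarith
        have e2 : h₂ x = h₂ z := by simp only [hsdef] at hsum; linarith
        have : d - (h₁ x - h₂ x) = 0 := by rw [hddef, e1, e2]; ring
        rw [this, mul_zero]
  -- integral of the key function
  have hig : Integrable (fun ω => (h₂ (X ω) - h₁ (X ω)) * (s - h₁ (X ω) - h₂ (X ω))) μ := by
    have : (fun ω => (h₂ (X ω) - h₁ (X ω)) * (s - h₁ (X ω) - h₂ (X ω)))
        = fun ω => (s * h₂ (X ω) - s * h₁ (X ω) - h₂ (X ω) ^ 2) + h₁ (X ω) ^ 2 := by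
      funext ω; ring
    rw [this]
    exact (((hi2.const_mul s).sub (hi1.const_mul s)).sub hisq2).add hisq1
  have hgval : ∫ ω, (h₂ (X ω) - h₁ (X ω)) * (s - h₁ (X ω) - h₂ (X ω)) ∂μ
      = s * (∫ ω, h₂ (X ω) ∂μ - ∫ ω, h₁ (X ω) ∂μ) := by
    have e : ∫ ω, (h₂ (X ω) - h₁ (X ω)) * (s - h₁ (X ω) - h₂ (X ω)) ∂μ
        = ∫ ω, ((s * h₂ (X ω) - s * h₁ (X ω) - h₂ (X ω) ^ 2) + h₁ (X ω) ^ 2) ∂μ := by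
      congr 1; funext ω; ring
    have A1 : ∫ ω, ((s * h₂ (X ω) - s * h₁ (X ω) - h₂ (X ω) ^ 2) + h₁ (X ω) ^ 2) ∂μ
        = ∫ ω, (s * h₂ (X ω) - s * h₁ (X ω) - h₂ (X ω) ^ 2) ∂μ + ∫ ω, h₁ (X ω) ^ 2 ∂μ :=
      integral_add (((hi2.const_mul s).sub (hi1.const_mul s)).sub hisq2) hisq1
    have A2 : ∫ ω, (s * h₂ (X ω) - s * h₁ (X ω) - h₂ (X ω) ^ 2) ∂μ
        = ∫ ω, (s * h₂ (X ω) - s * h₁ (X ω)) ∂μ - ∫ ω, h₂ (X ω) ^ 2 ∂μ :=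
      integral_sub ((hi2.const_mul s).sub (hi1.const_mul s)) hisq2
    have A3 : ∫ ω, (s * h₂ (X ω) - s * h₁ (X ω)) ∂μ
        = ∫ ω, s * h₂ (X ω) ∂μ - ∫ ω, s * h₁ (X ω) ∂μ :=
      integral_sub (hi2.const_mul s) (hi1.const_mul s)
    have A4 : ∫ ω, s * h₂ (X ω) ∂μ = s * ∫ ω, h₂ (X ω) ∂μ := integral_const_mul s _
    have A5 : ∫ ω, s * h₁ (X ω) ∂μ = s * ∫ ω, h₁ (X ω) ∂μ := integral_const_mul s _
    rw [e, A1, A2, A3, A4, A5, hmom]; ring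
  have hgnonneg : 0 ≤ ∫ ω, (h₂ (X ω) - h₁ (X ω)) * (s - h₁ (X ω) - h₂ (X ω)) ∂μ :=
    integral_nonneg fun ω => key _ (hX0 ω)
  rcases lt_or_ge (∫ ω, h₁ (X ω) ∂μ) (∫ ω, h₂ (X ω) ∂μ) with hlt | hge
  · exact Or.inr hlt
  -- equality-of-integrals case: show a.e. equality hence equality of maps
  left
  have hz : ∫ ω, (h₂ (X ω) - h₁ (X ω)) * (s - h₁ (X ω) - h₂ (X ω)) ∂μ = 0 := by
    rw [hgval]
    have : s * (∫ ω, h₂ (X ω) ∂μ - ∫ ω, h₁ (X ω) ∂μ) ≤ 0 :=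
      mul_nonpos_of_nonneg_of_nonpos hs0 (by linarith)
    rw [hgval] at hgnonneg; linarith
  have hgae : (fun ω => (h₂ (X ω) - h₁ (X ω)) * (s - h₁ (X ω) - h₂ (X ω))) =ᵐ[μ] 0 :=
    (integral_eq_zero_iff_of_nonneg (fun ω => key _ (hX0 ω)) hig).mp hz
  have haeq : (fun ω => h₁ (X ω)) =ᵐ[μ] (fun ω => h₂ (X ω)) := by
    rcases eq_or_lt_of_le hs0 with hs | hs
    · -- s = 0 : h₁ z = h₂ z = 0, degenerate
      filter_upwards [hgae] with ω hω
      simp only [Pi.zero_apply] at hω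
      rcases mul_eq_zero.mp hω with h | h
      · linarith
      · have h1 := (hb1 ω).1; have h2 := (hb2 ω).1
        have : s = 0 := hs.symm
        simp only [this] at h
        linarith
    · -- s > 0 : integrals are equal
      have heq : ∫ ω, h₁ (X ω) ∂μ = ∫ ω, h₂ (X ω) ∂μ := by
        rw [hgval] at hz
        rcases mul_eq_zero.mp hz with h | h
        · linarith
        · linarith
      -- a.e., (f₁-f₂)(d - (f₁-f₂)) = 0
      have hpae : (fun ω => (h₁ (X ω) - h₂ (X ω)) * (d - (h₁ (X ω) - h₂ (X ω)))) =ᵐ[μ] 0 := by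
        filter_upwards [hgae] with ω hω
        simp only [Pi.zero_apply] at hω ⊢
        exact key2 _ (hX0 ω) hω
      have hip : Integrable (fun ω => (h₁ (X ω) - h₂ (X ω)) * (d - (h₁ (X ω) - h₂ (X ω)))) μ := by
        have e : (fun ω => (h₁ (X ω) - h₂ (X ω)) * (d - (h₁ (X ω) - h₂ (X ω))))
            = fun ω => (d * h₁ (X ω) - d * h₂ (X ω)) - (h₁ (X ω) - h₂ (X ω)) ^ 2 := by
          funext ω; ring
        rw [e]
        exact ((hi1.const_mul d).sub (hi2.const_mul d)).sub hiq
      have hpint : ∫ ω, (h₁ (X ω) - h₂ (X ω)) * (d - (h₁ (X ω) - h₂ (X ω))) ∂μ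
          = - ∫ ω, (h₁ (X ω) - h₂ (X ω)) ^ 2 ∂μ := by
        have e : ∫ ω, (h₁ (X ω) - h₂ (X ω)) * (d - (h₁ (X ω) - h₂ (X ω))) ∂μ
            = ∫ ω, ((d * h₁ (X ω) - d * h₂ (X ω)) - (h₁ (X ω) - h₂ (X ω)) ^ 2) ∂μ := by
          congr 1; funext ω; ring
        have B1 : ∫ ω, ((d * h₁ (X ω) - d * h₂ (X ω)) - (h₁ (X ω) - h₂ (X ω)) ^ 2) ∂μ
            = ∫ ω, (d * h₁ (X ω) - d * h₂ (X ω)) ∂μ - ∫ ω, (h₁ (X ω) - h₂ (X ω)) ^ 2 ∂μ :=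
          integral_sub ((hi1.const_mul d).sub (hi2.const_mul d)) hiq
        have B2 : ∫ ω, (d * h₁ (X ω) - d * h₂ (X ω)) ∂μ
            = ∫ ω, d * h₁ (X ω) ∂μ - ∫ ω, d * h₂ (X ω) ∂μ :=
          integral_sub (hi1.const_mul d) (hi2.const_mul d)
        have B3 : ∫ ω, d * h₁ (X ω) ∂μ = d * ∫ ω, h₁ (X ω) ∂μ := integral_const_mul d _
        have B4 : ∫ ω, d * h₂ (X ω) ∂μ = d * ∫ ω, h₂ (X ω) ∂μ := integral_const_mul d _
        rw [e, B1, B2, B3, B4, heq]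
        ring
      have hpz : ∫ ω, (h₁ (X ω) - h₂ (X ω)) * (d - (h₁ (X ω) - h₂ (X ω))) ∂μ = 0 := by
        rw [integral_congr_ae hpae]; simp
      have hqz : ∫ ω, (h₁ (X ω) - h₂ (X ω)) ^ 2 ∂μ = 0 := by
        rw [hpint] at hpz; linarith
      have hqae : (fun ω => (h₁ (X ω) - h₂ (X ω)) ^ 2) =ᵐ[μ] 0 :=
        (integral_eq_zero_iff_of_nonneg (fun ω => sq_nonneg _) hiq).mp hqz
      filter_upwards [hqae] with ω hω
      simp only [Pi.zero_apply] at hω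
      have := pow_eq_zero_iff (n := 2) (by norm_num) |>.mp hω
      linarith [sub_eq_zero.mp this]
  exact Measure.map_congr haeq
end

section
/- Let U be three times differentiable with U' > 0, U'' < 0, and strictly decreasing absolute prudence. Then for fixed y > 0, the function H(w) = (U'(w−y) − U'(w)) / (−U''(w−y)) is strictly increasing in w on {w : w > y}. -/
/-!
Write `f = U'`, `g = U''`, `h = U'''`, `P = -h / g` and `a = w - y`. The numerator of `H'(w)` is
`g a (g w - g a) + h a (f a - f w)`. For fixed `a`, the function `t ↦ h a f t - g a g t` has
derivative `h a g t - g a h t = g a g t (P a - P t)`, negative for `t > a` because `P` is strictly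
decreasing and `g a g t > 0`; comparing its values at `a` and at `w > a` shows the numerator is
positive.
-/

open Set

section

variable {f g h : ℝ → ℝ}

theorem strictAntiOn_mul_sub_mul_of_strictAnti_neg_div
    (hf : ∀ t, HasDerivAt f (g t) t) (hg : ∀ t, HasDerivAt g (h t) t) (hneg : ∀ t, g t < 0)
    (hP : StrictAnti fun t => -h t / g t) (a : ℝ) :
    StrictAntiOn (fun t => h a * f t - g a * g t) (Ici a) := by
  have hderiv : ∀ t, HasDerivAt (fun t => h a * f t - g a * g t) (h a * g t - g a * h t) t :=
    fun t => ((hf t).const_mul (h a)).sub ((hg t).const_mul (g a))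
  refine strictAntiOn_of_hasDerivWithinAt_neg (convex_Ici a)
    (fun t _ => (hderiv t).continuousAt.continuousWithinAt)
    (fun t _ => (hderiv t).hasDerivWithinAt) fun t ht => ?_
  rw [interior_Ici] at ht
  have hPt : -h t / g t < -h a / g a := hP ht
  rw [neg_div, ← div_neg, neg_div, ← div_neg,
    div_lt_div_iff₀ (neg_pos.2 (hneg t)) (neg_pos.2 (hneg a))] at hPt
  linarith

theorem strictMono_sub_div_of_strictAnti_neg_div
    (hf : ∀ t, HasDerivAt f (g t) t) (hg : ∀ t, HasDerivAt g (h t) t) (hneg : ∀ t, g t < 0)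
    (hP : StrictAnti fun t => -h t / g t) {y : ℝ} (hy : 0 < y) :
    StrictMono fun w => (f (w - y) - f w) / -g (w - y) := by
  have hderiv : ∀ w, HasDerivAt (fun w => (f (w - y) - f w) / -g (w - y))
      (((g (w - y) - g w) * -g (w - y) - (f (w - y) - f w) * -h (w - y)) / (-g (w - y)) ^ 2) w :=
    fun w => (((hf (w - y)).comp_sub_const w y).sub (hf w)).div
      ((hg (w - y)).comp_sub_const w y).neg (neg_ne_zero.2 (hneg (w - y)).ne)
  refine strictMono_of_hasDerivAt_pos hderiv fun w => div_pos ?_ (pow_pos (neg_pos.2 (hneg _)) 2)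
  have hK := strictAntiOn_mul_sub_mul_of_strictAnti_neg_div hf hg hneg hP (w - y)
    self_mem_Ici (sub_le_self w hy.le) (sub_lt_self w hy)
  linarith

end

theorem stmt15_general (U : ℝ → ℝ) (hU : ContDiff ℝ 3 U)
    (hU'' : ∀ z, deriv (deriv U) z < 0)
    (hDAP : StrictAnti (fun z => -(deriv (deriv (deriv U)) z) / deriv (deriv U) z))
    (y : ℝ) (hy : 0 < y) :
    StrictMonoOn (fun w => (deriv U (w - y) - deriv U w) / (-(deriv (deriv U) (w - y))))
      (Set.Ioi y) := by
  have hU₁ : ContDiff ℝ 2 (deriv U) := hU.deriv'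
  have hf : ∀ t, HasDerivAt (deriv U) (deriv (deriv U) t) t :=
    fun t => (hU₁.differentiable (by norm_num) t).hasDerivAt
  have hg : ∀ t, HasDerivAt (deriv (deriv U)) (deriv (deriv (deriv U)) t) t :=
    fun t => (hU₁.differentiable_deriv_two t).hasDerivAt
  exact (strictMono_sub_div_of_strictAnti_neg_div hf hg hU'' hDAP hy).strictMonoOn _

theorem stmt15 (U : ℝ → ℝ) (hU : ContDiff ℝ 3 U)
    (hU' : ∀ z, 0 < deriv U z) (hU'' : ∀ z, deriv (deriv U) z < 0)
    (hDAP : StrictAnti (fun z => -(deriv (deriv (deriv U)) z) / deriv (deriv U) z))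
    (y : ℝ) (hy : 0 < y) :
    StrictMonoOn (fun w => (deriv U (w - y) - deriv U w) / (-(deriv (deriv U) (w - y))))
      (Set.Ioi y) :=
  stmt15_general U hU hU'' hDAP y hy
end
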